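/- Fix n ≥ 1 and suppose f ∈ B maximizes Re{f}_n over B, with {f}_n > 0 and {f}_0 > 0. Then the polynomial H(z) := {f}_n + 2{f}_{n−1}z + ... + 2{f}_0 zⁿ has positive real part on the open unit disk. -/

import Mathlib

/-!
For `‖w‖ < 1` the function `p_w z = (1 + w z) / (1 - w z)` has nonnegative real part on the disk,
so `f * exp (-t p_w)` stays in `B` for `t ≥ 0`. Its `n`-th coefficient is
`{f}_n - t {f p_w}_n + O(t²)`, the error being controlled by a Cauchy estimate, so maximality of
`Re {f}_n` forces `Re {f p_w}_n ≥ 0`. Expanding `p_w = 1 + 2 ∑ (w z)^k` identifies `{f p_w}_n`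
with `H w`. Hence `Re H ≥ 0` on the disk, and as `Re (H 0) = {f}_n > 0` the open mapping theorem
makes the inequality strict.
-/

open Complex Metric Finset

/-- The n-th Taylor coefficient of `f` at `0`. -/
noncomputable def taylorCoeff (f : ℂ → ℂ) (n : ℕ) : ℂ :=
  iteratedDeriv n f 0 / n.factorial

open Filter Topology

section TaylorCoeff

variable {f g : ℂ → ℂ} {m : ℕ}

theorem taylorCoeff_congr (h : f =ᶠ[𝓝 0] g) : taylorCoeff f m = taylorCoeff g m := by
  rw [taylorCoeff, taylorCoeff, h.iteratedDeriv_eq]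

theorem taylorCoeff_add (hf : ContDiffAt ℂ m f 0) (hg : ContDiffAt ℂ m g 0) :
    taylorCoeff (fun z => f z + g z) m = taylorCoeff f m + taylorCoeff g m := by
  rw [taylorCoeff, iteratedDeriv_fun_add hf hg, add_div, taylorCoeff, taylorCoeff]

theorem taylorCoeff_const_mul (c : ℂ) :
    taylorCoeff (fun z => c * f z) m = c * taylorCoeff f m := by
  rw [taylorCoeff, iteratedDeriv_const_mul_field, mul_div_assoc, taylorCoeff]

theorem taylorCoeff_sum {ι : Type*} {s : Finset ι} {F : ι → ℂ → ℂ}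
    (hF : ∀ i ∈ s, ContDiffAt ℂ m (F i) 0) :
    taylorCoeff (fun z => ∑ i ∈ s, F i z) m = ∑ i ∈ s, taylorCoeff (F i) m := by
  rw [taylorCoeff, iteratedDeriv_fun_sum hF, Finset.sum_div]
  rfl

theorem taylorCoeff_pow_mul (hg : ContDiffAt ℂ m g 0) (k : ℕ) :
    taylorCoeff (fun z => z ^ k * g z) m = if k ≤ m then taylorCoeff g (m - k) else 0 := by
  rw [taylorCoeff, iteratedDeriv_fun_mul (by fun_prop) hg]
  simp only [iteratedDeriv_fun_pow_zero]
  split_ifs with hk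
  · rw [taylorCoeff, ← Nat.choose_mul_factorial_mul_factorial hk, Nat.cast_mul, Nat.cast_mul,
      Finset.sum_eq_single k (fun i _ hik => by simp [hik]) (fun h => by simp at h; omega),
      if_pos rfl, mul_div_mul_left]
    exact mul_ne_zero (Nat.cast_ne_zero.2 (Nat.choose_pos hk).ne')
      (Nat.cast_ne_zero.2 k.factorial_ne_zero)
  · rw [Finset.sum_eq_zero fun i hi => ?_, zero_div]
    simp [show i ≠ k by simp at hi; omega]

theorem norm_taylorCoeff_le {R r C : ℝ} (hg : DifferentiableOn ℂ g (ball 0 R)) (hr : 0 < r)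
    (hrR : r < R) (hC : ∀ z ∈ sphere (0 : ℂ) r, ‖g z‖ ≤ C) :
    ‖taylorCoeff g m‖ ≤ C / r ^ m := by
  have hcauchy := norm_iteratedDeriv_le_of_forall_mem_sphere_norm_le m hr
    (hg.diffContOnCl_ball (closedBall_subset_ball hrR)) hC
  rw [taylorCoeff, norm_div, Complex.norm_natCast, div_le_iff₀ (by positivity)]
  calc ‖iteratedDeriv m g 0‖ ≤ m.factorial * C / r ^ m := hcauchy
    _ = C / r ^ m * m.factorial := by ring

theorem taylorCoeff_mul_exp (hf : ContDiffAt ℂ m f 0) (hg : ContDiffAt ℂ m g 0) :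
    taylorCoeff (fun z => f z * exp (g z)) m = taylorCoeff f m + taylorCoeff (fun z => f z * g z) m
      + taylorCoeff (fun z => f z * (exp (g z) - 1 - g z)) m := by
  rw [← taylorCoeff_add hf (by fun_prop), ← taylorCoeff_add (by fun_prop) (by fun_prop)]
  congr 1
  ext z
  ring

end TaylorCoeff

theorem one_add_div_one_sub_eq {K : Type*} [Field K] {v : K} (hv : v ≠ 1) (n : ℕ) :
    (1 + v) / (1 - v) = 1 + 2 * ∑ k ∈ Icc 1 n, v ^ k + 2 * v ^ (n + 1) / (1 - v) := by
  have h : (1 : K) - v ≠ 0 := sub_ne_zero.2 hv.symm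
  induction n with
  | zero =>
    simp only [zero_add, pow_one, Icc_eq_empty_of_lt one_pos, sum_empty]
    field_simp
    ring
  | succ n ih =>
    rw [ih, Finset.sum_Icc_succ_top (by omega)]
    field_simp
    ring

theorem taylorCoeff_mul_one_add_div_one_sub {f : ℂ → ℂ} {n : ℕ} (hf : ContDiffAt ℂ n f 0)
    (w : ℂ) :
    taylorCoeff (fun z => f z * ((1 + w * z) / (1 - w * z))) n
      = taylorCoeff f n + 2 * ∑ k ∈ Icc 1 n, taylorCoeff f (n - k) * w ^ k := by
  have hne : ∀ᶠ z in 𝓝 0, w * z ≠ 1 :=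
    (continuous_const.mul continuous_id).continuousAt.eventually_ne (by simp)
  have hrem : ContDiffAt ℂ n (fun z => f z / (1 - w * z)) 0 := hf.div (by fun_prop) (by simp)
  rw [taylorCoeff_congr (g := fun z => f z + (2 * ∑ k ∈ Icc 1 n, w ^ k * (z ^ k * f z)
      + 2 * w ^ (n + 1) * (z ^ (n + 1) * (f z / (1 - w * z)))))]
  · rw [taylorCoeff_add hf (by fun_prop), taylorCoeff_add (by fun_prop) (by fun_prop),
      taylorCoeff_const_mul, taylorCoeff_const_mul, taylorCoeff_pow_mul hrem,
      taylorCoeff_sum (fun k _ => by fun_prop)]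
    simp only [taylorCoeff_const_mul, taylorCoeff_pow_mul hf]
    rw [if_neg (by omega), mul_zero, add_zero]
    congr 2
    refine Finset.sum_congr rfl fun k hk => ?_
    rw [if_pos (Finset.mem_Icc.1 hk).2, mul_comm]
  · filter_upwards [hne] with z hz
    rw [one_add_div_one_sub_eq hz n, Finset.mul_sum, Finset.mul_sum, mul_add, mul_add,
      Finset.mul_sum]
    simp only [mul_pow]
    ring_nf

theorem re_one_add_div_one_sub_pos {v : ℂ} (hv : ‖v‖ < 1) : 0 < ((1 + v) / (1 - v)).re := by
  have hsq : normSq v < 1 := by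
    rw [normSq_eq_norm_sq]; nlinarith [norm_nonneg v]
  have hne : (1 : ℂ) - v ≠ 0 := sub_ne_zero.2 (by rintro rfl; simp at hv)
  rw [div_re, ← add_div]
  apply div_pos _ (normSq_pos.2 hne)
  simp only [normSq_apply] at hsq
  simp only [add_re, one_re, sub_re, add_im, one_im, sub_im]
  nlinarith

def classB : Set (ℂ → ℂ) :=
  {f | DifferentiableOn ℂ f (ball 0 1) ∧ ∀ z ∈ ball (0 : ℂ) 1, 0 < ‖f z‖ ∧ ‖f z‖ ≤ 1}

section ClassB

variable {f g : ℂ → ℂ}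

theorem mul_exp_mem_classB (hf : f ∈ classB) (hg : DifferentiableOn ℂ g (ball 0 1))
    (hre : ∀ z ∈ ball (0 : ℂ) 1, (g z).re ≤ 0) : (fun z => f z * exp (g z)) ∈ classB := by
  refine ⟨hf.1.mul hg.cexp, fun z hz => ?_⟩
  obtain ⟨hpos, hle⟩ := hf.2 z hz
  rw [norm_mul, norm_exp]
  exact ⟨by positivity, mul_le_one₀ hle (Real.exp_nonneg _) (Real.exp_le_one_iff.2 (hre z hz))⟩

theorem norm_taylorCoeff_mul_exp_sub_le (hf : f ∈ classB) (hg : DifferentiableOn ℂ g (ball 0 1))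
    {ε : ℝ} (hε : ε ≤ 1) (hgε : ∀ z ∈ sphere (0 : ℂ) (1 / 2), ‖g z‖ ≤ ε) (m : ℕ) :
    ‖taylorCoeff (fun z => f z * (exp (g z) - 1 - g z)) m‖ ≤ 2 ^ m * ε ^ 2 := by
  have hsphere : sphere (0 : ℂ) (1 / 2) ⊆ ball 0 1 := sphere_subset_ball (by norm_num)
  have hbound : ∀ z ∈ sphere (0 : ℂ) (1 / 2), ‖f z * (exp (g z) - 1 - g z)‖ ≤ ε ^ 2 := by
    intro z hz
    have hgz := hgε z hz
    rw [norm_mul, ← one_mul (ε ^ 2)]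
    refine mul_le_mul (hf.2 z (hsphere hz)).2 ?_ (norm_nonneg _) zero_le_one
    calc ‖exp (g z) - 1 - g z‖ ≤ ‖g z‖ ^ 2 := norm_exp_sub_one_sub_id_le (hgz.trans hε)
      _ ≤ ε ^ 2 := pow_le_pow_left₀ (norm_nonneg _) hgz 2
  have hdiff : DifferentiableOn ℂ (fun z => f z * (exp (g z) - 1 - g z)) (ball 0 1) :=
    hf.1.mul ((hg.cexp.sub_const 1).sub hg)
  calc ‖taylorCoeff (fun z => f z * (exp (g z) - 1 - g z)) m‖ ≤ ε ^ 2 / (1 / 2) ^ m :=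
        norm_taylorCoeff_le hdiff (by norm_num) (by norm_num) hbound
    _ = 2 ^ m * ε ^ 2 := by rw [one_div, inv_pow, div_inv_eq_mul, mul_comm]

theorem re_taylorCoeff_mul_nonneg_of_isMaxOn {p : ℂ → ℂ} {n : ℕ} (hf : f ∈ classB)
    (hmax : IsMaxOn (fun q => (taylorCoeff q n).re) classB f)
    (hp : DifferentiableOn ℂ p (ball 0 1)) (hre : ∀ z ∈ ball (0 : ℂ) 1, 0 ≤ (p z).re) :
    0 ≤ (taylorCoeff (fun z => f z * p z) n).re := by
  have hsphere : sphere (0 : ℂ) (1 / 2) ⊆ ball 0 1 := sphere_subset_ball (by norm_num)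
  obtain ⟨M, hM⟩ := (isCompact_sphere (0 : ℂ) (1 / 2)).exists_bound_of_continuousOn
    (hp.continuousOn.mono hsphere)
  set K := max M 1
  have hK : 0 < K := one_pos.trans_le (le_max_right _ _)
  set a := taylorCoeff (fun z => f z * p z) n
  have hstep : ∀ t ∈ Set.Ioo (0 : ℝ) K⁻¹, -a.re ≤ 2 ^ n * K ^ 2 * t := by
    rintro t ⟨ht, htK⟩
    set g : ℂ → ℂ := fun z => -(t : ℂ) * p z
    have hg : DifferentiableOn ℂ g (ball 0 1) := hp.const_mul _
    have hq := isMaxOn_iff.1 hmax _ <| mul_exp_mem_classB hf hg fun z hz => by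
      simpa [g] using mul_nonneg ht.le (hre z hz)
    have hfg : taylorCoeff (fun z => f z * g z) n = -t * a := by
      simp only [g, mul_left_comm (f _)]
      exact taylorCoeff_const_mul _
    have htK' : t * K ≤ 1 := ((lt_inv_mul_iff₀' hK).1 (by rwa [mul_one])).le
    have hgK : ∀ z ∈ sphere (0 : ℂ) (1 / 2), ‖g z‖ ≤ t * K := fun z hz => by
      simpa [g, abs_of_pos ht] using
        mul_le_mul_of_nonneg_left ((hM z hz).trans (le_max_left _ _)) ht.le
    have hrem := (neg_le_abs _).trans <| (abs_re_le_norm _).trans <|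
      norm_taylorCoeff_mul_exp_sub_le hf hg htK' hgK n
    rw [taylorCoeff_mul_exp (hf.1.analyticAt (ball_mem_nhds 0 one_pos)).contDiffAt
      (hg.analyticAt (ball_mem_nhds 0 one_pos)).contDiffAt, hfg] at hq
    simp only [add_re, mul_re, neg_re, ofReal_re, neg_im, ofReal_im] at hq
    refine le_of_mul_le_mul_left ?_ ht
    nlinarith
  have hlim : Tendsto (fun t : ℝ => 2 ^ n * K ^ 2 * t) (𝓝[>] 0) (𝓝 0) :=
    ((continuous_const_mul _).tendsto' 0 0 (mul_zero _)).mono_left nhdsWithin_le_nhds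
  have := ge_of_tendsto hlim (mem_of_superset (Ioo_mem_nhdsGT (inv_pos.2 hK)) hstep)
  linarith

end ClassB

theorem AnalyticOnNhd.re_pos_of_re_nonneg {H : ℂ → ℂ} {U : Set ℂ} (hH : AnalyticOnNhd ℂ H U)
    (hU : IsOpen U) (hUc : IsPreconnected U) {z₀ : ℂ} (hz₀ : z₀ ∈ U) (hpos : 0 < (H z₀).re)
    (hnonneg : ∀ z ∈ U, 0 ≤ (H z).re) : ∀ z ∈ U, 0 < (H z).re := by
  rcases hH.is_constant_or_isOpen hUc with ⟨w, hw⟩ | hopen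
  · intro z hz
    rwa [hw z hz, ← hw z₀ hz₀]
  · have hsub : re '' (H '' U) ⊆ Set.Ioi 0 := by
      rw [← interior_Ici]
      refine interior_maximal ?_ (isOpenMap_re _ (hopen U subset_rfl hU))
      rintro _ ⟨_, ⟨z, hz, rfl⟩, rfl⟩
      exact hnonneg z hz
    exact fun z hz => hsub ⟨H z, ⟨z, hz, rfl⟩, rfl⟩

theorem stmt_11_general (n : ℕ) (f : ℂ → ℂ)
    (hf : DifferentiableOn ℂ f (ball (0 : ℂ) 1))
    (hfB : ∀ z ∈ ball (0 : ℂ) 1, 0 < ‖f z‖ ∧ ‖f z‖ ≤ 1)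
    (hmax : ∀ q : ℂ → ℂ, DifferentiableOn ℂ q (ball (0 : ℂ) 1) →
      (∀ z ∈ ball (0 : ℂ) 1, 0 < ‖q z‖ ∧ ‖q z‖ ≤ 1) →
      (taylorCoeff q n).re ≤ (taylorCoeff f n).re)
    (hfn : (taylorCoeff f n).im = 0 ∧ 0 < (taylorCoeff f n).re)
    (H : ℂ → ℂ)
    (hH : ∀ z : ℂ, H z = taylorCoeff f n
        + 2 * ∑ k ∈ Finset.Icc 1 n, taylorCoeff f (n - k) * z ^ k) :
    ∀ z ∈ ball (0 : ℂ) 1, 0 < (H z).re := by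
  have hnonneg (w : ℂ) (hw : w ∈ ball (0 : ℂ) 1) : 0 ≤ (H w).re := by
    have hwz : ∀ z ∈ ball (0 : ℂ) 1, ‖w * z‖ < 1 := fun z hz => by
      rw [mem_ball_zero_iff] at hw hz
      rw [norm_mul]
      nlinarith [norm_nonneg w, norm_nonneg z]
    rw [hH, ← taylorCoeff_mul_one_add_div_one_sub
      (hf.analyticAt (ball_mem_nhds 0 one_pos)).contDiffAt w]
    refine re_taylorCoeff_mul_nonneg_of_isMaxOn ⟨hf, hfB⟩
      (isMaxOn_iff.2 fun q hq => hmax q hq.1 hq.2) ?_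
      fun z hz => (re_one_add_div_one_sub_pos (hwz z hz)).le
    refine DifferentiableOn.div (by fun_prop) (by fun_prop) fun z hz => sub_ne_zero.2 ?_
    exact fun h => by simpa [← h] using hwz z hz
  have hH0 : H 0 = taylorCoeff f n := by
    rw [hH, Finset.sum_eq_zero fun k hk => by
      simp [Nat.one_le_iff_ne_zero.1 (Finset.mem_Icc.1 hk).1], mul_zero, add_zero]
  have hHdiff : Differentiable ℂ H := by
    rw [show H = _ from funext hH]
    fun_prop
  exact (hHdiff.differentiableOn.analyticOnNhd isOpen_ball).re_pos_of_re_nonneg isOpen_ball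
    (convex_ball 0 1).isPreconnected (mem_ball_self one_pos) (hH0 ▸ hfn.2) hnonneg

theorem stmt_11 (n : ℕ) (hn : 1 ≤ n) (f : ℂ → ℂ)
    (hf : DifferentiableOn ℂ f (ball (0 : ℂ) 1))
    (hfB : ∀ z ∈ ball (0 : ℂ) 1, 0 < ‖f z‖ ∧ ‖f z‖ ≤ 1)
    (hmax : ∀ q : ℂ → ℂ, DifferentiableOn ℂ q (ball (0 : ℂ) 1) →
      (∀ z ∈ ball (0 : ℂ) 1, 0 < ‖q z‖ ∧ ‖q z‖ ≤ 1) →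
      (taylorCoeff q n).re ≤ (taylorCoeff f n).re)
    (hfn : (taylorCoeff f n).im = 0 ∧ 0 < (taylorCoeff f n).re)
    (hf0 : (taylorCoeff f 0).im = 0 ∧ 0 < (taylorCoeff f 0).re)
    (H : ℂ → ℂ)
    (hH : ∀ z : ℂ, H z = taylorCoeff f n
        + 2 * ∑ k ∈ Finset.Icc 1 n, taylorCoeff f (n - k) * z ^ k) :
    ∀ z ∈ ball (0 : ℂ) 1, 0 < (H z).re :=
  stmt_11_general n f hf hfB hmax hfn H hH
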